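/- Let D be an m × n random matrix whose rows are i.i.d. Markov rows with initial distribution u and transition matrix P = γI + (1−γ)U, let s ≥ 1 with s+1 ≤ n, and let P̃ be the collapsed 2×2 transition matrix and Q = P̃^s. Let H̃_1 = #{ i : D_{i,1} ≠ 1 } and H̃_{s+1} = #{ i : D_{i,s+1} ≠ 1 }. Then for all integers 0 ≤ r ≤ m and 0 ≤ k ≤ m, Pr(H̃_1 = r, H̃_{s+1} = k) = C(m,r) (1−u_1)^r u_1^{m−r} · Pr(A + B = k), where A ~ Binomial(r, Q_{2,2}) and B ~ Binomial(m−r, Q_{1,2}) are independent. In particular, conditioned on H̃_1 = r, the histogram H̃_{s+1} is distributed as A + B. -/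

import Mathlib

open Finset

noncomputable section

/-- Probability that a single row of the database equals `x : Fin n → Fin q`,
when rows follow a first-order Markov chain over the alphabet `Fin q`
(the symbols `1, …, q` of the paper) with initial distribution `u` and
transition matrix `P`:  `u_{x_1} ∏_{t=1}^{n-1} P_{x_t, x_{t+1}}`. -/
def markovRowProb {q : ℕ} (u : Fin q → ℝ) (P : Matrix (Fin q) (Fin q) ℝ)
    {n : ℕ} (x : Fin n → Fin q) : ℝ :=
  ∏ t : Fin n,
    if (t : ℕ) = 0 then u (x t)
    else P (x ⟨(t : ℕ) - 1, Nat.lt_of_le_of_lt (Nat.sub_le _ _) t.isLt⟩) (x t)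

/-- Collapsed histogram of column `j` of the database `D`: the number of rows
whose entry in column `j` differs from the symbol `1` (index `0` of `Fin q`). -/
def collapsedHist {q m n : ℕ} (D : Fin m → Fin n → Fin q) (j : Fin n) : ℕ :=
  (Finset.univ.filter fun i : Fin m => ((D i j : ℕ) ≠ 0)).card

/-- The `Binomial(N, p)` probability mass function at `k`
(it vanishes for `k > N` since then `C(N,k) = 0`). -/
def binomPMF (N : ℕ) (p : ℝ) (k : ℕ) : ℝ :=
  (N.choose k : ℝ) * p ^ k * (1 - p) ^ (N - k)

/-! ### Auxiliary machinery -/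

open Polynomial in
lemma JLCH.coeff_linpow (a b : ℝ) (n j : ℕ) :
    ((C a + C b * X : ℝ[X]) ^ n).coeff j = (n.choose j : ℝ) * b ^ j * a ^ (n - j) := by
  rw [add_comm, add_pow, Polynomial.finset_sum_coeff]
  have h : ∀ i ∈ Finset.range (n + 1),
      ((C b * X) ^ i * C a ^ (n - i) * ((n.choose i : ℕ) : ℝ[X])).coeff j
        = if i = j then (n.choose j : ℝ) * b ^ j * a ^ (n - j) else 0 := by
    intro i hi
    have : (C b * X) ^ i * C a ^ (n - i) * ((n.choose i : ℕ) : ℝ[X])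
        = C (b ^ i * a ^ (n - i) * (n.choose i : ℝ)) * X ^ i := by
      rw [mul_pow, ← C_pow, ← C_pow, ← Polynomial.C_eq_natCast, C_mul, C_mul]
      ring
    rw [this, coeff_C_mul, coeff_X_pow]
    by_cases hij : i = j
    · subst hij; simp [mul_comm, mul_assoc, mul_left_comm]
    · simp [hij, Ne.symm hij]
  rw [Finset.sum_congr rfl h, Finset.sum_ite_eq' (Finset.range (n + 1))]
  by_cases hj : j ∈ Finset.range (n + 1)
  · simp [hj]
  · simp only [hj, if_false]
    rw [Finset.mem_range, not_lt] at hj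
    rw [Nat.choose_eq_zero_of_lt hj]
    simp

open Polynomial in
lemma JLCH.sum_card_eq_coeff {ι : Type*} [Fintype ι] [DecidableEq ι]
    (w0 w1 : ι → ℝ) (k : ℕ) :
    ∑ T : Finset ι, (if T.card = k then (1:ℝ) else 0) * ((∏ i ∈ T, w1 i) * ∏ i ∈ Tᶜ, w0 i)
      = (∏ i : ι, (C (w0 i) + C (w1 i) * X)).coeff k := by
  rw [show (∏ i : ι, (C (w0 i) + C (w1 i) * X)) = ∏ i : ι, (C (w1 i) * X + C (w0 i)) from
    Finset.prod_congr rfl (fun i _ => add_comm _ _)]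
  rw [Finset.prod_add, Polynomial.finset_sum_coeff, ← Finset.powerset_univ]
  refine Finset.sum_congr rfl fun T _ => ?_
  have h1 : ∏ i ∈ T, (C (w1 i) * X : ℝ[X]) = C (∏ i ∈ T, w1 i) * X ^ T.card := by
    rw [Finset.prod_mul_distrib, Finset.prod_const, map_prod]
  have h2 : ∏ i ∈ univ \ T, (C (w0 i) : ℝ[X]) = C (∏ i ∈ Tᶜ, w0 i) := by
    rw [map_prod, Finset.compl_eq_univ_sdiff]
  rw [h1, h2, mul_right_comm, ← C_mul, coeff_C_mul, coeff_X_pow]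
  by_cases hT : T.card = k
  · simp [hT, mul_comm]
  · simp only [hT, if_false, zero_mul]
    rw [if_neg (fun h : k = T.card => hT h.symm), mul_zero]

open Polynomial in
lemma JLCH.comb (m r k : ℕ) (p : Fin 2 → Fin 2 → ℝ) :
    ∑ ST : Finset (Fin m) × Finset (Fin m),
      (if ST.1.card = r ∧ ST.2.card = k then (1:ℝ) else 0) *
        ∏ i, p (if i ∈ ST.1 then 1 else 0) (if i ∈ ST.2 then 1 else 0)
    = (m.choose r : ℝ) * ∑ a ∈ Finset.range (k+1),
        ((r.choose a : ℝ) * ((m-r).choose (k-a) : ℝ) *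
        (p 1 1 ^ a * p 1 0 ^ (r-a)) * (p 0 1 ^ (k-a) * p 0 0 ^ ((m-r)-(k-a)))) := by
  rw [Fintype.sum_prod_type]
  have key : ∀ S : Finset (Fin m), S.card = r →
      ∑ T : Finset (Fin m), (if T.card = k then (1:ℝ) else 0) *
        ∏ i, p (if i ∈ S then 1 else 0) (if i ∈ T then 1 else 0)
      = ∑ a ∈ Finset.range (k+1),
        ((r.choose a : ℝ) * ((m-r).choose (k-a) : ℝ) *
        (p 1 1 ^ a * p 1 0 ^ (r-a)) * (p 0 1 ^ (k-a) * p 0 0 ^ ((m-r)-(k-a)))) := by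
    intro S hS
    have hprod : ∀ T : Finset (Fin m),
        (∏ i, p (if i ∈ S then 1 else 0) (if i ∈ T then 1 else 0))
        = (∏ i ∈ T, (fun i => p (if i ∈ S then 1 else 0) 1) i) *
          ∏ i ∈ Tᶜ, (fun i => p (if i ∈ S then 1 else 0) 0) i := by
      intro T
      rw [← Finset.prod_mul_prod_compl T]
      congr 1
      · exact Finset.prod_congr rfl fun i hi => by rw [if_pos hi]
      · exact Finset.prod_congr rfl fun i hi => by
          rw [if_neg (Finset.mem_compl.mp hi)]
    calc ∑ T : Finset (Fin m), (if T.card = k then (1:ℝ) else 0) *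
            ∏ i, p (if i ∈ S then 1 else 0) (if i ∈ T then 1 else 0)
        = (∏ i : Fin m, (C (p (if i ∈ S then 1 else 0) 0) +
            C (p (if i ∈ S then 1 else 0) 1) * X)).coeff k := by
          rw [← JLCH.sum_card_eq_coeff]
          exact Finset.sum_congr rfl fun T _ => by rw [hprod T]
      _ = ((C (p 1 0) + C (p 1 1) * X) ^ r *
            (C (p 0 0) + C (p 0 1) * X) ^ (m - r) : ℝ[X]).coeff k := by
          congr 1
          rw [← Finset.prod_mul_prod_compl S]
          congr 1
          · rw [Finset.prod_congr rfl (fun i hi => by rw [if_pos hi]),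
              Finset.prod_const, hS]
          · rw [Finset.prod_congr rfl
              (fun i hi => by rw [if_neg (Finset.mem_compl.mp hi)]),
              Finset.prod_const, Finset.card_compl, Fintype.card_fin, hS]
      _ = _ := by
          rw [Polynomial.coeff_mul, Finset.Nat.sum_antidiagonal_eq_sum_range_succ_mk]
          exact Finset.sum_congr rfl fun a _ => by
            rw [JLCH.coeff_linpow, JLCH.coeff_linpow]; ring
  have split : ∀ S T : Finset (Fin m),
      (if S.card = r ∧ T.card = k then (1:ℝ) else 0)
      = (if S.card = r then (1:ℝ) else 0) * (if T.card = k then (1:ℝ) else 0) := by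
    intro S T
    by_cases h1 : S.card = r <;> by_cases h2 : T.card = k <;> simp [h1, h2]
  calc ∑ S : Finset (Fin m), ∑ T : Finset (Fin m),
          (if S.card = r ∧ T.card = k then (1:ℝ) else 0) *
            ∏ i, p (if i ∈ S then 1 else 0) (if i ∈ T then 1 else 0)
      = ∑ S : Finset (Fin m), (if S.card = r then (1:ℝ) else 0) *
          ∑ T : Finset (Fin m), (if T.card = k then (1:ℝ) else 0) *
            ∏ i, p (if i ∈ S then 1 else 0) (if i ∈ T then 1 else 0) := by
        refine Finset.sum_congr rfl fun S _ => ?_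
        rw [Finset.mul_sum]
        exact Finset.sum_congr rfl fun T _ => by rw [split, mul_assoc]
    _ = ∑ S : Finset (Fin m), (if S.card = r then
          (∑ a ∈ Finset.range (k+1),
            ((r.choose a : ℝ) * ((m-r).choose (k-a) : ℝ) *
            (p 1 1 ^ a * p 1 0 ^ (r-a)) * (p 0 1 ^ (k-a) * p 0 0 ^ ((m-r)-(k-a)))))
          else 0) := by
        refine Finset.sum_congr rfl fun S _ => ?_
        by_cases hS : S.card = r
        · rw [if_pos hS, if_pos hS, one_mul, key S hS]
        · rw [if_neg hS, if_neg hS, zero_mul]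
    _ = _ := by
        rw [Finset.sum_ite, Finset.sum_const, Finset.sum_const_zero, add_zero,
          nsmul_eq_mul]
        congr 2
        rw [← Finset.powerset_univ, ← Finset.powersetCard_eq_filter,
          Finset.card_powersetCard, Finset.card_univ, Fintype.card_fin]

/-- The chain weight of a path, with initial weight vector `v`. -/
def JLCH.chainP {q N : ℕ} (v : Fin q → ℝ) (P : Matrix (Fin q) (Fin q) ℝ)
    (x : Fin (N+1) → Fin q) : ℝ :=
  v (x 0) * ∏ t : Fin N, P (x t.castSucc) (x t.succ)

namespace JLCH

lemma sum_cons_fin {q N : ℕ} (f : (Fin (N+2) → Fin q) → ℝ) :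
    ∑ x : Fin (N+2) → Fin q, f x
      = ∑ i : Fin q, ∑ y : Fin (N+1) → Fin q, f (Fin.cons i y) := by
  rw [← (Fin.consEquiv (fun _ : Fin (N+2) => Fin q)).sum_comp, Fintype.sum_prod_type]
  rfl

lemma chainP_cons {q N : ℕ} (v : Fin q → ℝ) (P : Matrix (Fin q) (Fin q) ℝ)
    (i : Fin q) (y : Fin (N+1) → Fin q) :
    chainP v P (Fin.cons i y) = v i * chainP (fun j => P i j) P y := by
  simp only [chainP, Fin.cons_zero, Fin.prod_univ_succ, Fin.castSucc_zero,
    Fin.succ_zero_eq_one, ← Fin.succ_castSucc, Fin.cons_succ]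

lemma chainP_total {q N : ℕ} (v : Fin q → ℝ) (P : Matrix (Fin q) (Fin q) ℝ)
    (hP1 : ∀ i, ∑ j, P i j = 1) :
    ∑ x : Fin (N+1) → Fin q, chainP v P x = ∑ i, v i := by
  induction N generalizing v with
  | zero =>
      rw [← (Equiv.funUnique (Fin 1) (Fin q)).symm.sum_comp]
      simp [chainP]
  | succ N ih =>
      rw [sum_cons_fin]
      simp only [chainP_cons]
      calc ∑ i, ∑ y : Fin (N+1) → Fin q, v i * chainP (fun j => P i j) P y
          = ∑ i, v i * ∑ y : Fin (N+1) → Fin q, chainP (fun j => P i j) P y :=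
            Finset.sum_congr rfl fun i _ => (Finset.mul_sum _ _ _).symm
        _ = ∑ i, v i := Finset.sum_congr rfl fun i _ => by rw [ih, hP1 i, mul_one]

lemma chain_sum {q : ℕ} (P : Matrix (Fin q) (Fin q) ℝ)
    (hP1 : ∀ i, ∑ j, P i j = 1) :
    ∀ (N s : ℕ) (hs : s ≤ N) (v g : Fin q → ℝ),
    ∑ x : Fin (N+1) → Fin q, chainP v P x * g (x ⟨s, by omega⟩)
      = ∑ i, ∑ j, v i * (P ^ s) i j * g j := by
  intro N
  induction N with
  | zero =>
      intro s hs v g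
      obtain rfl : s = 0 := Nat.le_zero.mp hs
      rw [← (Equiv.funUnique (Fin 1) (Fin q)).symm.sum_comp]
      simp [chainP, Matrix.one_apply, mul_ite, ite_mul, Finset.sum_ite_eq]
  | succ N ih =>
      intro s hs v g
      rw [sum_cons_fin]
      simp only [chainP_cons]
      cases s with
      | zero =>
          simp only [Fin.mk_zero, Fin.cons_zero]
          calc ∑ i, ∑ y : Fin (N+1) → Fin q, v i * chainP (fun j => P i j) P y * g i
              = ∑ i, (v i * g i) *
                  ∑ y : Fin (N+1) → Fin q, chainP (fun j => P i j) P y := by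
                refine Finset.sum_congr rfl fun i _ => ?_
                rw [Finset.mul_sum]
                exact Finset.sum_congr rfl fun y _ => by ring
            _ = ∑ i, v i * g i := Finset.sum_congr rfl fun i _ => by
                rw [chainP_total _ _ hP1, hP1 i, mul_one]
            _ = ∑ i, ∑ j, v i * (P ^ 0) i j * g j := by
                simp [Matrix.one_apply, mul_ite, ite_mul, Finset.sum_ite_eq]
      | succ s' =>
          have hs' : s' ≤ N := by omega
          have hc : ∀ (i : Fin q) (y : Fin (N+1) → Fin q),
              (Fin.cons i y : Fin (N+2) → Fin q) ⟨s'+1, by omega⟩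
                = y ⟨s', by omega⟩ := fun i y => by
            rw [show (⟨s'+1, by omega⟩ : Fin (N+2)) = Fin.succ ⟨s', by omega⟩ from rfl,
              Fin.cons_succ]
          simp only [hc]
          calc ∑ i, ∑ y : Fin (N+1) → Fin q,
                  v i * chainP (fun j => P i j) P y * g (y ⟨s', by omega⟩)
              = ∑ i, v i * ∑ y : Fin (N+1) → Fin q,
                  chainP (fun j => P i j) P y * g (y ⟨s', by omega⟩) := by
                refine Finset.sum_congr rfl fun i _ => ?_
                rw [Finset.mul_sum]
                exact Finset.sum_congr rfl fun y _ => by ring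
            _ = ∑ i, v i * ∑ l, ∑ j, P i l * (P ^ s') l j * g j :=
                Finset.sum_congr rfl fun i _ => by rw [ih s' hs']
            _ = ∑ i, ∑ j, v i * (P ^ (s'+1)) i j * g j := by
                refine Finset.sum_congr rfl fun i _ => ?_
                calc v i * ∑ l, ∑ j, P i l * (P ^ s') l j * g j
                    = ∑ l, ∑ j, v i * (P i l * (P ^ s') l j * g j) := by
                      rw [Finset.mul_sum]
                      exact Finset.sum_congr rfl fun l _ => Finset.mul_sum _ _ _
                  _ = ∑ j, ∑ l, v i * (P i l * (P ^ s') l j * g j) := Finset.sum_comm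
                  _ = ∑ j, v i * (P ^ (s'+1)) i j * g j := by
                      refine Finset.sum_congr rfl fun j _ => ?_
                      rw [pow_succ', Matrix.mul_apply, Finset.mul_sum, Finset.sum_mul]
                      exact Finset.sum_congr rfl fun l _ => by ring

lemma markov_eq_chain {q N : ℕ} (u : Fin q → ℝ) (P : Matrix (Fin q) (Fin q) ℝ)
    (x : Fin (N+1) → Fin q) : markovRowProb u P x = chainP u P x := by
  rw [markovRowProb, chainP, Fin.prod_univ_succ]
  congr 1

lemma pow_row_sum {d : ℕ} (M : Matrix (Fin d) (Fin d) ℝ)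
    (h : ∀ i, ∑ j, M i j = 1) : ∀ (t : ℕ) (i : Fin d), ∑ j, (M ^ t) i j = 1 := by
  intro t
  induction t with
  | zero => intro i; simp [Matrix.one_apply, Finset.sum_ite_eq]
  | succ t ih =>
      intro i
      calc ∑ j, (M ^ (t+1)) i j = ∑ j, ∑ l, (M ^ t) i l * M l j := by
            simp [pow_succ, Matrix.mul_apply]
        _ = ∑ l, ∑ j, (M ^ t) i l * M l j := Finset.sum_comm
        _ = ∑ l, (M ^ t) i l := Finset.sum_congr rfl fun l _ => by
            rw [← Finset.mul_sum, h l, mul_one]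
        _ = 1 := ih i

lemma fiber_factor {α β : Type*} [Fintype α] [Fintype β] [DecidableEq β]
    [DecidableEq α] (m : ℕ) (w : α → ℝ) (typ : α → β) (F : (Fin m → β) → ℝ) :
    ∑ D : Fin m → α, (∏ i, w (D i)) * F (fun i => typ (D i))
      = ∑ τ : Fin m → β, F τ * ∏ i, ∑ x ∈ univ.filter (fun x => typ x = τ i), w x := by
  rw [← Finset.sum_fiberwise univ (fun D : Fin m → α => fun i => typ (D i))
        (fun D => (∏ i, w (D i)) * F (fun i => typ (D i)))]
  refine Finset.sum_congr rfl fun τ _ => ?_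
  have hset : univ.filter (fun D : Fin m → α => (fun i => typ (D i)) = τ)
      = Fintype.piFinset (fun i => univ.filter (fun x => typ x = τ i)) := by
    ext D
    simp [Fintype.mem_piFinset, funext_iff]
  calc ∑ D ∈ univ.filter (fun D : Fin m → α => (fun i => typ (D i)) = τ),
          (∏ i, w (D i)) * F (fun i => typ (D i))
      = ∑ D ∈ univ.filter (fun D : Fin m → α => (fun i => typ (D i)) = τ),
          F τ * ∏ i, w (D i) := by
        refine Finset.sum_congr rfl fun D hD => ?_
        rw [(Finset.mem_filter.mp hD).2, mul_comm]
    _ = F τ * ∑ D ∈ Fintype.piFinset (fun i => univ.filter (fun x => typ x = τ i)),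
          ∏ i, w (D i) := by
        rw [← Finset.mul_sum, hset]
    _ = _ := by rw [← Finset.prod_univ_sum]

/-- The equivalence between `Fin 2`-valued functions and finsets. -/
def finTwoEquiv {α : Type*} [Fintype α] [DecidableEq α] : (α → Fin 2) ≃ Finset α where
  toFun σ := univ.filter (fun i => σ i = 1)
  invFun S := fun i => if i ∈ S then 1 else 0
  left_inv σ := funext fun i => by
    by_cases h : σ i = 1
    · simp [h]
    · have h0 : σ i = 0 := by omega
      simp [h0]
  right_inv S := by
    ext i
    simp

/-- The collapse map sending symbol `0` to state `0` and all others to state `1`. -/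
def cmap {q : ℕ} (j : Fin q) : Fin 2 := if (j : ℕ) = 0 then 0 else 1

lemma cmap_eq_zero_iff {q : ℕ} (j : Fin q) : cmap j = 0 ↔ (j : ℕ) = 0 := by
  unfold cmap
  by_cases h : (j : ℕ) = 0 <;> simp [h]

lemma cmap_eq_one_iff {q : ℕ} (j : Fin q) : cmap j = 1 ↔ (j : ℕ) ≠ 0 := by
  unfold cmap
  by_cases h : (j : ℕ) = 0 <;> simp [h]

/-- Functions `Fin m → Fin 2 × Fin 2` as pairs of finsets. -/
def pairEquiv {m : ℕ} : Finset (Fin m) × Finset (Fin m) ≃ (Fin m → Fin 2 × Fin 2) :=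
  (Equiv.prodCongr finTwoEquiv.symm finTwoEquiv.symm).trans
    (Equiv.arrowProdEquivProdArrow (Fin m) (fun _ => Fin 2) (fun _ => Fin 2)).symm

lemma pairEquiv_apply {m : ℕ} (ST : Finset (Fin m) × Finset (Fin m)) (i : Fin m) :
    pairEquiv ST i = ((if i ∈ ST.1 then 1 else 0 : Fin 2),
      (if i ∈ ST.2 then 1 else 0 : Fin 2)) := rfl

end JLCH

/-- **Joint law of two collapsed column histograms.**
For i.i.d. Markov rows with transition matrix `P = γ • I + (1 − γ) • U`, letting
`P̃` be the collapsed `2 × 2` transition matrix, `Q = P̃ ^ s`, `H̃_1` the collapsed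
histogram of column `1` and `H̃_{s+1}` that of column `s + 1`,
`Pr(H̃_1 = r, H̃_{s+1} = k) = C(m,r) (1−u₁)^r u₁^(m−r) · Pr(A + B = k)`,
where `A ~ Binomial(r, Q₂₂)` and `B ~ Binomial(m − r, Q₁₂)` are independent.
(In Lean the states `1, 2` are the indices `0, 1` of `Fin 2`, so `Q₂₂ = Q 1 1`
and `Q₁₂ = Q 0 1`.) -/
theorem joint_law_of_collapsed_histograms
    (q : ℕ) (hq : 2 ≤ q)
    (u : Fin q → ℝ) (hu_pos : ∀ j, 0 < u j) (hu_sum : ∑ j, u j = 1)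
    (γ : ℝ) (hγ_lb : ∀ j, -(u j / (1 - u j)) < γ) (hγ_ub : γ < 1)
    (P : Matrix (Fin q) (Fin q) ℝ)
    (hP : P = γ • (1 : Matrix (Fin q) (Fin q) ℝ) +
      (1 - γ) • Matrix.of fun _ j => u j)
    (u₁ : ℝ) (hu₁ : u₁ = u ⟨0, by omega⟩)
    (Q : Matrix (Fin 2) (Fin 2) ℝ)
    (s : ℕ) (hs : 1 ≤ s)
    (hQ : Q = (!![γ + (1 - γ) * u₁, (1 - γ) * (1 - u₁);
        (1 - γ) * u₁, 1 - (1 - γ) * u₁]) ^ s)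
    (m n : ℕ) (hsn : s + 1 ≤ n) (r k : ℕ) (hr : r ≤ m) (hk : k ≤ m) :
    ∑ D : Fin m → Fin n → Fin q,
        (∏ i, markovRowProb u P (D i)) *
          (if collapsedHist D ⟨0, by omega⟩ = r ∧
              collapsedHist D ⟨s, by omega⟩ = k then 1 else 0) =
      (m.choose r : ℝ) * (1 - u₁) ^ r * u₁ ^ (m - r) *
        ∑ a ∈ Finset.range (k + 1),
          binomPMF r (Q 1 1) a * binomPMF (m - r) (Q 0 1) (k - a) := by
  obtain ⟨N, rfl⟩ : ∃ N, n = N + 1 := ⟨n - 1, by omega⟩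
  have hsN : s ≤ N := by omega
  set i0 : Fin q := ⟨0, by omega⟩ with hi0
  set Pt : Matrix (Fin 2) (Fin 2) ℝ := !![γ + (1 - γ) * u₁, (1 - γ) * (1 - u₁);
      (1 - γ) * u₁, 1 - (1 - γ) * u₁] with hPt
  have hPapp : ∀ i j, P i j = γ * (if i = j then 1 else 0) + (1 - γ) * u j := by
    intro i j; rw [hP]; simp [Matrix.one_apply]
  have hPsum : ∀ i, ∑ j, P i j = 1 := by
    intro i
    simp only [hPapp]
    rw [Finset.sum_add_distrib, ← Finset.mul_sum, ← Finset.mul_sum, hu_sum,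
      Finset.sum_ite_eq univ i (fun _ => (1:ℝ))]
    simp only [Finset.mem_univ, if_true]
    ring
  have hfil0 : univ.filter (fun j : Fin q => JLCH.cmap j = 0) = {i0} := by
    ext j
    simp only [mem_filter, mem_univ, true_and, mem_singleton,
      JLCH.cmap_eq_zero_iff]
    constructor
    · intro h; exact Fin.ext (by simp [hi0, h])
    · intro h; simp [h, hi0]
  have hfil1 : univ.filter (fun j : Fin q => JLCH.cmap j = 1) = {i0}ᶜ := by
    ext j
    simp only [mem_filter, mem_univ, true_and, mem_compl, mem_singleton,
      JLCH.cmap_eq_one_iff]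
    constructor
    · intro h hj; exact h (by simp [hj, hi0])
    · intro h hv; exact h (Fin.ext (by simp [hi0, hv]))
  have hsum_compl : ∀ f : Fin q → ℝ, ∑ j ∈ ({i0} : Finset (Fin q))ᶜ, f j
      = (∑ j, f j) - f i0 := by
    intro f
    have h := Finset.sum_compl_add_sum ({i0} : Finset (Fin q)) f
    rw [Finset.sum_singleton] at h
    linarith
  have hPt00 : Pt 0 0 = γ + (1 - γ) * u₁ := by rw [hPt]; simp
  have hPt01 : Pt 0 1 = (1 - γ) * (1 - u₁) := by rw [hPt]; simp
  have hPt10 : Pt 1 0 = (1 - γ) * u₁ := by rw [hPt]; simp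
  have hPt11 : Pt 1 1 = 1 - (1 - γ) * u₁ := by rw [hPt]; simp
  have hcm0 : ∀ i : Fin q, i = i0 → JLCH.cmap i = 0 := fun i hi => by
    rw [JLCH.cmap_eq_zero_iff, hi, hi0]
  have hcm1 : ∀ i : Fin q, i ≠ i0 → JLCH.cmap i = 1 := fun i hi => by
    rw [JLCH.cmap_eq_one_iff]
    intro hv
    exact hi (Fin.ext (by rw [hv, hi0]))
  have hbase : ∀ (i : Fin q) (b : Fin 2),
      ∑ j ∈ univ.filter (fun j => JLCH.cmap j = b), P i j = Pt (JLCH.cmap i) b := by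
    intro i b
    have hPii0 : P i i0 = γ * (if i = i0 then 1 else 0) + (1 - γ) * u₁ := by
      rw [hPapp, hu₁, hi0]
    fin_cases b
    · show ∑ j ∈ univ.filter (fun j => JLCH.cmap j = 0), P i j = Pt (JLCH.cmap i) 0
      rw [hfil0, Finset.sum_singleton, hPii0]
      by_cases hi : i = i0
      · rw [if_pos hi, hcm0 i hi, hPt00]; ring
      · rw [if_neg hi, hcm1 i hi, hPt10]; ring
    · show ∑ j ∈ univ.filter (fun j => JLCH.cmap j = 1), P i j = Pt (JLCH.cmap i) 1
      rw [hfil1, hsum_compl, hPsum i, hPii0]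
      by_cases hi : i = i0
      · rw [if_pos hi, hcm0 i hi, hPt01]; ring
      · rw [if_neg hi, hcm1 i hi, hPt11]; ring
  have hlump : ∀ (t : ℕ) (i : Fin q) (b : Fin 2),
      ∑ j ∈ univ.filter (fun j => JLCH.cmap j = b), (P ^ t) i j
        = (Pt ^ t) (JLCH.cmap i) b := by
    intro t
    induction t with
    | zero =>
        intro i b
        simp only [pow_zero, Matrix.one_apply]
        rw [Finset.sum_ite_eq (univ.filter (fun j => JLCH.cmap j = b)) i
          (fun _ => (1:ℝ))]
        by_cases hib : JLCH.cmap i = b <;> simp [hib]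
    | succ t ih =>
        intro i b
        calc ∑ j ∈ univ.filter (fun j => JLCH.cmap j = b), (P ^ (t+1)) i j
            = ∑ j ∈ univ.filter (fun j => JLCH.cmap j = b), ∑ l, (P ^ t) i l * P l j := by
              refine Finset.sum_congr rfl fun j _ => ?_
              rw [pow_succ, Matrix.mul_apply]
          _ = ∑ l, ∑ j ∈ univ.filter (fun j => JLCH.cmap j = b), (P ^ t) i l * P l j :=
              Finset.sum_comm
          _ = ∑ l, (P ^ t) i l * Pt (JLCH.cmap l) b := by
              refine Finset.sum_congr rfl fun l _ => ?_
              rw [← Finset.mul_sum, hbase l b]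
          _ = ∑ b' : Fin 2, ∑ l ∈ univ.filter (fun l => JLCH.cmap l = b'),
                (P ^ t) i l * Pt (JLCH.cmap l) b :=
              (Finset.sum_fiberwise univ JLCH.cmap _).symm
          _ = ∑ b' : Fin 2, (Pt ^ t) (JLCH.cmap i) b' * Pt b' b := by
              refine Finset.sum_congr rfl fun b' _ => ?_
              rw [← ih i b', Finset.sum_mul]
              refine Finset.sum_congr rfl fun l hl => ?_
              rw [(Finset.mem_filter.mp hl).2]
          _ = (Pt ^ (t+1)) (JLCH.cmap i) b := by rw [pow_succ, Matrix.mul_apply]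
  have hmass0 : ∑ i ∈ univ.filter (fun i => JLCH.cmap i = 0), u i = u₁ := by
    rw [hfil0, Finset.sum_singleton, hu₁, hi0]
  have hmass1 : ∑ i ∈ univ.filter (fun i => JLCH.cmap i = 1), u i = 1 - u₁ := by
    rw [hfil1, hsum_compl, hu_sum, hu₁, hi0]
  have hfilnot : univ.filter (fun j : Fin q => JLCH.cmap j = 1)
      = univ.filter (fun j => ¬ JLCH.cmap j = 0) := by
    refine Finset.filter_congr fun j _ => ?_
    constructor
    · intro h; omega
    · intro h; omega
  have hQsto : ∀ a : Fin 2, (Pt ^ s) a 0 + (Pt ^ s) a 1 = 1 := by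
    intro a
    obtain ⟨i, hi⟩ : ∃ i : Fin q, JLCH.cmap i = a := by
      fin_cases a
      · exact ⟨i0, hcm0 i0 rfl⟩
      · refine ⟨⟨1, by omega⟩, ?_⟩
        show JLCH.cmap ⟨1, by omega⟩ = 1
        rw [JLCH.cmap_eq_one_iff]
        simp
    rw [← hi, ← hlump s i 0, ← hlump s i 1, hfilnot,
      Finset.sum_filter_add_sum_filter_not]
    exact JLCH.pow_row_sum P hPsum s i
  have h0N : (⟨0, by omega⟩ : Fin (N+1)) = 0 := Fin.mk_zero
  have hprow : ∀ t : Fin 2 × Fin 2,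
      ∑ x ∈ univ.filter (fun x : Fin (N+1) → Fin q =>
          (JLCH.cmap (x ⟨0, by omega⟩), JLCH.cmap (x ⟨s, by omega⟩)) = t),
        markovRowProb u P x
      = (if t.1 = 0 then u₁ else 1 - u₁) * (Pt ^ s) t.1 t.2 := by
    intro t
    obtain ⟨t1, t2⟩ := t
    rw [Finset.sum_filter]
    have hx : ∀ x : Fin (N+1) → Fin q,
        (if (JLCH.cmap (x ⟨0, by omega⟩), JLCH.cmap (x ⟨s, by omega⟩)) = (t1, t2)
          then markovRowProb u P x else 0)
        = JLCH.chainP (fun i => u i * (if JLCH.cmap i = t1 then 1 else 0)) P x *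
            (if JLCH.cmap (x ⟨s, by omega⟩) = t2 then 1 else 0) := by
      intro x
      have hch : JLCH.chainP (fun i => u i * (if JLCH.cmap i = t1 then 1 else 0)) P x
          = JLCH.chainP u P x * (if JLCH.cmap (x 0) = t1 then 1 else 0) := by
        unfold JLCH.chainP; ring
      rw [hch, ← JLCH.markov_eq_chain, h0N]
      by_cases h1 : JLCH.cmap (x 0) = t1 <;>
        by_cases h2 : JLCH.cmap (x ⟨s, by omega⟩) = t2 <;>
        simp [h1, h2, Prod.ext_iff]
    rw [Finset.sum_congr rfl fun x _ => hx x,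
      JLCH.chain_sum P hPsum N s hsN (fun i => u i * (if JLCH.cmap i = t1 then 1 else 0))
        (fun j => if JLCH.cmap j = t2 then 1 else 0)]
    calc ∑ i, ∑ j, (u i * (if JLCH.cmap i = t1 then 1 else 0)) * (P ^ s) i j *
            (if JLCH.cmap j = t2 then 1 else 0)
        = ∑ i, (u i * (if JLCH.cmap i = t1 then 1 else 0)) * (Pt ^ s) (JLCH.cmap i) t2 := by
          refine Finset.sum_congr rfl fun i _ => ?_
          rw [← hlump s i t2, Finset.sum_filter, Finset.mul_sum]
          refine Finset.sum_congr rfl fun j _ => ?_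
          by_cases h : JLCH.cmap j = t2
          · simp [h]
          · simp [h]
      _ = ∑ i ∈ univ.filter (fun i => JLCH.cmap i = t1), u i * (Pt ^ s) t1 t2 := by
          rw [Finset.sum_filter]
          refine Finset.sum_congr rfl fun i _ => ?_
          by_cases h : JLCH.cmap i = t1
          · rw [if_pos h, if_pos h, h]; ring
          · rw [if_neg h, if_neg h]; ring
      _ = (∑ i ∈ univ.filter (fun i => JLCH.cmap i = t1), u i) * (Pt ^ s) t1 t2 :=
          (Finset.sum_mul _ _ _).symm
      _ = (if t1 = 0 then u₁ else 1 - u₁) * (Pt ^ s) t1 t2 := by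
          congr 1
          by_cases ht : t1 = 0
          · rw [if_pos ht, ht, hmass0]
          · rw [if_neg ht, show t1 = 1 from by omega, hmass1]
  -- reduction of the indicator to the collapsed types
  have hind : ∀ D : Fin m → Fin (N+1) → Fin q,
      (if collapsedHist D ⟨0, by omega⟩ = r ∧ collapsedHist D ⟨s, by omega⟩ = k
        then (1:ℝ) else 0)
      = (fun τ : Fin m → Fin 2 × Fin 2 =>
          if (univ.filter fun i => (τ i).1 = 1).card = r ∧
             (univ.filter fun i => (τ i).2 = 1).card = k then (1:ℝ) else 0)
        (fun i => (JLCH.cmap (D i ⟨0, by omega⟩), JLCH.cmap (D i ⟨s, by omega⟩))) := by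
    intro D
    have hcol : ∀ j : Fin (N+1), collapsedHist D j
        = (univ.filter fun i => JLCH.cmap (D i j) = 1).card := by
      intro j
      unfold collapsedHist
      congr 1
      exact Finset.filter_congr fun i _ => (JLCH.cmap_eq_one_iff (D i j)).symm
    simp only [hcol]
  calc ∑ D : Fin m → Fin (N+1) → Fin q,
          (∏ i, markovRowProb u P (D i)) *
            (if collapsedHist D ⟨0, by omega⟩ = r ∧
                collapsedHist D ⟨s, by omega⟩ = k then 1 else 0)
      = ∑ D : Fin m → Fin (N+1) → Fin q,
          (∏ i, markovRowProb u P (D i)) *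
            ((fun τ : Fin m → Fin 2 × Fin 2 =>
              if (univ.filter fun i => (τ i).1 = 1).card = r ∧
                 (univ.filter fun i => (τ i).2 = 1).card = k then (1:ℝ) else 0)
              (fun i => (JLCH.cmap (D i ⟨0, by omega⟩), JLCH.cmap (D i ⟨s, by omega⟩)))) :=
        Finset.sum_congr rfl fun D _ => by rw [hind D]
    _ = ∑ τ : Fin m → Fin 2 × Fin 2,
          (if (univ.filter fun i => (τ i).1 = 1).card = r ∧
              (univ.filter fun i => (τ i).2 = 1).card = k then (1:ℝ) else 0) *
          ∏ i, ∑ x ∈ univ.filter (fun x : Fin (N+1) → Fin q =>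
            (JLCH.cmap (x ⟨0, by omega⟩), JLCH.cmap (x ⟨s, by omega⟩)) = τ i),
            markovRowProb u P x :=
        JLCH.fiber_factor m (markovRowProb u P)
          (fun x : Fin (N+1) → Fin q =>
            (JLCH.cmap (x ⟨0, by omega⟩), JLCH.cmap (x ⟨s, by omega⟩)))
          (fun τ : Fin m → Fin 2 × Fin 2 =>
            if (univ.filter fun i => (τ i).1 = 1).card = r ∧
               (univ.filter fun i => (τ i).2 = 1).card = k then (1:ℝ) else 0)
    _ = ∑ τ : Fin m → Fin 2 × Fin 2,
          (if (univ.filter fun i => (τ i).1 = 1).card = r ∧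
              (univ.filter fun i => (τ i).2 = 1).card = k then (1:ℝ) else 0) *
          ∏ i, (if (τ i).1 = 0 then u₁ else 1 - u₁) * (Pt ^ s) (τ i).1 (τ i).2 := by
        refine Finset.sum_congr rfl fun τ _ => ?_
        congr 1
        exact Finset.prod_congr rfl fun i _ => hprow (τ i)
    _ = (m.choose r : ℝ) * (1 - u₁) ^ r * u₁ ^ (m - r) *
        ∑ a ∈ Finset.range (k + 1),
          binomPMF r (Q 1 1) a * binomPMF (m - r) (Q 0 1) (k - a) := by
        have he : ∀ (ST : Finset (Fin m) × Finset (Fin m)) (i : Fin m),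
            JLCH.pairEquiv ST i = ((if i ∈ ST.1 then 1 else 0 : Fin 2),
              (if i ∈ ST.2 then 1 else 0 : Fin 2)) := JLCH.pairEquiv_apply
        have hS : ∀ S : Finset (Fin m),
            univ.filter (fun i => (if i ∈ S then (1:Fin 2) else 0) = 1) = S := by
          intro S; ext i; by_cases h : i ∈ S <;> simp [h]
        have hstep := Equiv.sum_comp (JLCH.pairEquiv (m := m))
          (fun τ : Fin m → Fin 2 × Fin 2 =>
          (if (univ.filter fun i => (τ i).1 = 1).card = r ∧
              (univ.filter fun i => (τ i).2 = 1).card = k then (1:ℝ) else 0) *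
          ∏ i, (if (τ i).1 = 0 then u₁ else 1 - u₁) * (Pt ^ s) (τ i).1 (τ i).2)
        rw [← hstep]
        have hrw : ∀ ST : Finset (Fin m) × Finset (Fin m),
            (if (univ.filter fun i => (JLCH.pairEquiv ST i).1 = 1).card = r ∧
                (univ.filter fun i => (JLCH.pairEquiv ST i).2 = 1).card = k
              then (1:ℝ) else 0) *
            ∏ i, (if (JLCH.pairEquiv ST i).1 = 0 then u₁ else 1 - u₁) *
              (Pt ^ s) (JLCH.pairEquiv ST i).1 (JLCH.pairEquiv ST i).2
            = (if ST.1.card = r ∧ ST.2.card = k then (1:ℝ) else 0) *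
            ∏ i, (fun a b => (if a = (0:Fin 2) then u₁ else 1 - u₁) * (Pt ^ s) a b)
              (if i ∈ ST.1 then 1 else 0) (if i ∈ ST.2 then 1 else 0) := by
          intro ST
          simp only [he, hS]
        rw [Finset.sum_congr rfl fun ST _ => hrw ST,
          JLCH.comb m r k (fun a b => (if a = (0:Fin 2) then u₁ else 1 - u₁) * (Pt ^ s) a b)]
        have h11 : (if (1:Fin 2) = 0 then u₁ else 1 - u₁) * (Pt ^ s) 1 1
            = (1 - u₁) * Q 1 1 := by
          rw [hQ, if_neg (by decide : ¬ (1:Fin 2) = 0)]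
        have h10 : (if (1:Fin 2) = 0 then u₁ else 1 - u₁) * (Pt ^ s) 1 0
            = (1 - u₁) * (1 - Q 1 1) := by
          rw [hQ, if_neg (by decide : ¬ (1:Fin 2) = 0),
            show (Pt ^ s) 1 0 = 1 - (Pt ^ s) 1 1 from by linarith [hQsto 1]]
        have h01 : (if (0:Fin 2) = 0 then u₁ else 1 - u₁) * (Pt ^ s) 0 1
            = u₁ * Q 0 1 := by
          rw [hQ, if_pos rfl]
        have h00 : (if (0:Fin 2) = 0 then u₁ else 1 - u₁) * (Pt ^ s) 0 0
            = u₁ * (1 - Q 0 1) := by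
          rw [hQ, if_pos rfl,
            show (Pt ^ s) 0 0 = 1 - (Pt ^ s) 0 1 from by linarith [hQsto 0]]
        rw [h11, h10, h01, h00]
        have hterm : ∀ a ∈ Finset.range (k+1),
            (r.choose a : ℝ) * ((m-r).choose (k-a) : ℝ) *
              (((1 - u₁) * Q 1 1) ^ a * ((1 - u₁) * (1 - Q 1 1)) ^ (r-a)) *
              ((u₁ * Q 0 1) ^ (k-a) * (u₁ * (1 - Q 0 1)) ^ ((m-r)-(k-a)))
            = (1 - u₁) ^ r * u₁ ^ (m - r) *
              (binomPMF r (Q 1 1) a * binomPMF (m - r) (Q 0 1) (k - a)) := by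
          intro a _
          by_cases h1 : a ≤ r
          · by_cases h2 : k - a ≤ m - r
            · have e1 : (1 - u₁) ^ a * (1 - u₁) ^ (r - a) = (1 - u₁) ^ r := by
                rw [← pow_add]; congr 1; omega
              have e2 : u₁ ^ (k - a) * u₁ ^ ((m - r) - (k - a)) = u₁ ^ (m - r) := by
                rw [← pow_add]; congr 1; omega
              simp only [binomPMF, mul_pow]
              calc (r.choose a : ℝ) * ((m-r).choose (k-a) : ℝ) *
                    ((1 - u₁) ^ a * Q 1 1 ^ a * ((1 - u₁) ^ (r-a) * (1 - Q 1 1) ^ (r-a))) *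
                    (u₁ ^ (k-a) * Q 0 1 ^ (k-a) *
                      (u₁ ^ ((m-r)-(k-a)) * (1 - Q 0 1) ^ ((m-r)-(k-a))))
                  = ((1 - u₁) ^ a * (1 - u₁) ^ (r - a)) *
                    (u₁ ^ (k - a) * u₁ ^ ((m - r) - (k - a))) *
                    ((r.choose a : ℝ) * Q 1 1 ^ a * (1 - Q 1 1) ^ (r-a)) *
                    (((m-r).choose (k-a) : ℝ) * Q 0 1 ^ (k-a) *
                      (1 - Q 0 1) ^ ((m-r)-(k-a))) := by ring
                _ = _ := by rw [e1, e2]; ring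
            · have hz : (m-r).choose (k-a) = 0 := Nat.choose_eq_zero_of_lt (by omega)
              simp [binomPMF, hz]
          · have hz : r.choose a = 0 := Nat.choose_eq_zero_of_lt (by omega)
            simp [binomPMF, hz]
        rw [Finset.sum_congr rfl hterm, ← Finset.mul_sum]
        ring




end
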